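/- arXiv:1508.05854 — 4 statements merged into one kernel-verified Lean document; each statement's English description precedes it below -/
import Mathlib

section
/- Let μ be a δ-dimensional Γ-invariant conformal density with δ > 0, and suppose η ∈ ∂X is a point mass for μ (i.e., μ_o({η}) > 0). Then for every x ∈ X and every γ in the stabilizer Γ_η of η in Γ, one has B_η(x, γx) = 0. -/
open MeasureTheory

/-! Under a conformal density the mass of the atom `{η}` seen from `x` is
`e^{δ B_η(o, x)} μ_o{η}`, and a finite positive atom can be cancelled, so `B_η(o, ·)` is read off
from that mass. An element `γ` fixing `η` does not change the mass, hence
`B_η(o, γx) = B_η(o, x)`, and the cocycle identity gives `B_η(x, γx) = 0`. -/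

theorem eq_of_ofReal_exp_mul_mul_eq {δ s t : ℝ} {a : ENNReal} (hδ : δ ≠ 0)
    (ha₀ : a ≠ 0) (ha : a ≠ ⊤)
    (h : ENNReal.ofReal (Real.exp (δ * s)) * a = ENNReal.ofReal (Real.exp (δ * t)) * a) :
    s = t := by
  rw [ENNReal.mul_left_inj ha₀ ha,
    ENNReal.ofReal_eq_ofReal_iff (Real.exp_nonneg _) (Real.exp_nonneg _)] at h
  exact mul_left_cancel₀ hδ (Real.exp_injective h)

theorem busem_eq_of_measure_singleton_eq {X Bd : Type*} [MeasurableSpace Bd] {δ : ℝ} {o : X}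
    {busem : Bd → X → X → ℝ} {μ : X → Measure Bd}
    (hconf : ∀ (x : X) (η' : Bd),
      μ x {η'} = ENNReal.ofReal (Real.exp (δ * busem η' o x)) * μ o {η'})
    (hδ : δ ≠ 0) {η : Bd} (hatom : μ o {η} ≠ 0) (hfin : μ o {η} ≠ ⊤) {x y : X}
    (h : μ x {η} = μ y {η}) :
    busem η o x = busem η o y :=
  eq_of_ofReal_exp_mul_mul_eq hδ hatom hfin <| by rw [← hconf, ← hconf, h]

theorem busemann_zero_of_point_mass_general {X Bd Γ : Type*} [MeasurableSpace Bd]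
    [Group Γ] [MulAction Γ X] [MulAction Γ Bd]
    (δ : ℝ) (hδ : 0 < δ) (o : X)
    (busem : Bd → X → X → ℝ)
    (hcocycle : ∀ (ξ : Bd) (x y z : X), busem ξ x z = busem ξ x y + busem ξ y z)
    (μ : X → Measure Bd)
    (hconf : ∀ (x : X) (η' : Bd),
      μ x {η'} = ENNReal.ofReal (Real.exp (δ * busem η' o x)) * μ o {η'})
    (hequiv : ∀ (γ : Γ) (x : X) (η' : Bd), μ (γ • x) {γ • η'} = μ x {η'})
    (η : Bd) (hatom : 0 < μ o {η}) (hfin : μ o {η} < ⊤)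
    (x : X) (γ : Γ) (hγ : γ • η = η) :
    busem η x (γ • x) = 0 := by
  have hmass : μ (γ • x) {η} = μ x {η} := by
    simpa only [hγ] using hequiv γ x η
  have hB : busem η o (γ • x) = busem η o x :=
    busem_eq_of_measure_singleton_eq hconf hδ.ne' hatom.ne' hfin.ne hmass
  linarith [hcocycle η o x (γ • x)]

/-- Let `μ` be a `δ`-dimensional `Γ`-invariant conformal density with `δ > 0`, and
suppose `η ∈ ∂X` is a point mass for `μ` (i.e. `μ_o({η}) > 0`). Then for every `x ∈ X` and every
`γ` in the stabilizer of `η` in `Γ`, one has `B_η(x, γx) = 0`. -/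
theorem busemann_zero_of_point_mass {X Bd Γ : Type*} [MetricSpace X] [MeasurableSpace Bd]
    [Group Γ] [MulAction Γ X] [MulAction Γ Bd]
    (δ : ℝ) (hδ : 0 < δ) (o : X)
    (busem : Bd → X → X → ℝ)
    (hcocycle : ∀ (ξ : Bd) (x y z : X), busem ξ x z = busem ξ x y + busem ξ y z)
    (hbequiv : ∀ (γ : Γ) (ξ : Bd) (x y : X), busem (γ • ξ) (γ • x) (γ • y) = busem ξ x y)
    (μ : X → Measure Bd)
    (hconf : ∀ (x : X) (η' : Bd),
      μ x {η'} = ENNReal.ofReal (Real.exp (δ * busem η' o x)) * μ o {η'})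
    (hequiv : ∀ (γ : Γ) (x : X) (η' : Bd), μ (γ • x) {γ • η'} = μ x {η'})
    (η : Bd) (hatom : 0 < μ o {η}) (hfin : μ o {η} < ⊤)
    (x : X) (γ : Γ) (hγ : γ • η = η) :
    busem η x (γ • x) = 0 :=
  busemann_zero_of_point_mass_general δ hδ o busem hcocycle μ hconf hequiv η hatom hfin x γ hγ
end

section
/- A radial limit point cannot be an atom of a δ-dimensional Γ-invariant conformal density with δ > 0. That is, if η belongs to the radial limit set of Γ then μ_o({η}) = 0. -/
open Filter Topology MeasureTheory

/-- A radial limit point cannot be an atom of a `δ`-dimensional `Γ`-invariant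
conformal density with `δ > 0`: if `η` belongs to the radial limit set of `Γ` (some geodesic
ray from `o` asymptotic to `η` meets infinitely many balls `B_{γo}(c)` with `d(o,γo) → ∞`),
then `μ_o({η}) = 0`. -/
theorem radial_limit_point_not_atom {X Bd Γ : Type*} [MetricSpace X] [MeasurableSpace Bd]
    [Group Γ] [MulAction Γ X] [MulAction Γ Bd]
    (δ : ℝ) (hδ : 0 < δ) (o : X)
    (busem : Bd → X → X → ℝ)
    (ray : X → Bd → ℝ → X)
    (hray0 : ∀ (x : X) (ξ : Bd), ray x ξ 0 = x)
    (hrayisom : ∀ (x : X) (ξ : Bd) (s t : ℝ), 0 ≤ s → 0 ≤ t →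
      dist (ray x ξ s) (ray x ξ t) = |s - t|)
    (hlim : ∀ (ξ : Bd) (x y z : X),
      Tendsto (fun s => dist x (ray z ξ s) - dist y (ray z ξ s)) atTop (𝓝 (busem ξ x y)))
    (hcocycle : ∀ (ξ : Bd) (x y z : X), busem ξ x z = busem ξ x y + busem ξ y z)
    (hbequiv : ∀ (γ : Γ) (ξ : Bd) (x y : X), busem (γ • ξ) (γ • x) (γ • y) = busem ξ x y)
    (μ : X → Measure Bd) (hfin : μ o Set.univ < ⊤)
    (hconf : ∀ (x : X) (η' : Bd),
      μ x {η'} = ENNReal.ofReal (Real.exp (δ * busem η' o x)) * μ o {η'})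
    (hequiv : ∀ (γ : Γ) (x : X) (η' : Bd), μ (γ • x) {γ • η'} = μ x {η'})
    (η : Bd)
    (hrad : ∃ c > (0:ℝ), ∀ R : ℝ, ∃ γ : Γ, R < dist o (γ • o) ∧
      ∃ t : ℝ, 0 ≤ t ∧ dist (ray o η t) (γ • o) < c) :
    μ o {η} = 0 := by
  by_contra hne
  obtain ⟨c, hc, hshad⟩ := hrad
  set p := μ o {η} with hp
  have hpM : p ≤ μ o Set.univ := measure_mono (Set.subset_univ _)
  have hpt : p ≠ ⊤ := (lt_of_le_of_lt hpM hfin).ne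
  have hpR : 0 < p.toReal := ENNReal.toReal_pos hne hpt
  set Mr := (μ o Set.univ).toReal with hMr
  set R := 2 * c + (Mr / p.toReal) / δ with hR
  obtain ⟨γ, hd, t, ht0, htc⟩ := hshad R
  -- Busemann lower bound from the shadow condition
  have hB : dist o (γ • o) - 2 * c ≤ busem η o (γ • o) := by
    refine ge_of_tendsto (hlim η o (γ • o) o) ?_
    filter_upwards [eventually_ge_atTop t] with s hs
    have hs0 : 0 ≤ s := le_trans ht0 hs
    have h1 : dist o (ray o η s) = s := by
      have := hrayisom o η 0 s le_rfl hs0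
      rw [hray0] at this
      rw [this, abs_of_nonpos (by linarith)]; ring
    have h2 : dist (γ • o) (ray o η s) ≤ c + (s - t) := by
      calc dist (γ • o) (ray o η s)
          ≤ dist (γ • o) (ray o η t) + dist (ray o η t) (ray o η s) :=
            dist_triangle _ _ _
        _ ≤ c + (s - t) := by
            have := hrayisom o η t s ht0 hs0
            rw [abs_of_nonpos (by linarith)] at this
            rw [dist_comm (γ • o), this]
            linarith
    have h3 : dist o (γ • o) ≤ t + c := by
      calc dist o (γ • o) ≤ dist o (ray o η t) + dist (ray o η t) (γ • o) :=
            dist_triangle _ _ _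
        _ ≤ t + c := by
            have := hrayisom o η 0 t le_rfl ht0
            rw [hray0, abs_of_nonpos (by linarith)] at this
            rw [this]; linarith
    have : dist o (γ • o) - 2 * c ≤ s - (c + (s - t)) := by linarith
    calc dist o (γ • o) - 2 * c ≤ s - (c + (s - t)) := this
      _ ≤ dist o (ray o η s) - dist (γ • o) (ray o η s) := by
          rw [h1]; linarith
  -- equivariance: μ o {γ⁻¹ • η} = μ (γ • o) {η}
  have e1 : μ o {γ⁻¹ • η} = μ (γ • o) {η} := by
    have := hequiv γ⁻¹ (γ • o) η
    simpa [inv_smul_smul] using this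
  have e2 : μ (γ • o) {η} = ENNReal.ofReal (Real.exp (δ * busem η o (γ • o))) * p :=
    hconf (γ • o) η
  -- the measure of the translated atom is bounded by the total mass
  have hle : (μ (γ • o) {η}).toReal ≤ Mr := by
    rw [← e1]
    exact ENNReal.toReal_mono hfin.ne (measure_mono (Set.subset_univ _))
  have htr : (μ (γ • o) {η}).toReal = Real.exp (δ * busem η o (γ • o)) * p.toReal := by
    rw [e2, ENNReal.toReal_mul, ENNReal.toReal_ofReal (Real.exp_nonneg _)]
  -- but it is strictly bigger than the total mass
  have hexp : Mr / p.toReal < Real.exp (δ * busem η o (γ • o)) := by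
    have h4 : Mr / p.toReal ≤ δ * busem η o (γ • o) := by
      have h5 : R - 2 * c ≤ busem η o (γ • o) := by linarith
      have h6 : δ * (R - 2 * c) ≤ δ * busem η o (γ • o) :=
        mul_le_mul_of_nonneg_left h5 hδ.le
      have heq : δ * (R - 2 * c) = Mr / p.toReal := by
        rw [hR]; field_simp; ring
      rw [← heq]; exact h6
    calc Mr / p.toReal < Real.exp (Mr / p.toReal) :=
        lt_of_lt_of_le (by linarith) (Real.add_one_le_exp _)
      _ ≤ Real.exp (δ * busem η o (γ • o)) := Real.exp_le_exp.2 h4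
  have : Mr < (μ (γ • o) {η}).toReal := by
    rw [htr]
    calc Mr = (Mr / p.toReal) * p.toReal := by field_simp
      _ < Real.exp (δ * busem η o (γ • o)) * p.toReal :=
        mul_lt_mul_of_pos_right hexp hpR
  linarith
end

section
/- If the Poincaré series ∑_{γ∈Γ} e^{−δ d(o,γo)} converges, then the radial limit set has μ_o-measure zero: μ_o(L_Γ^rad) = 0. -/
/-!
A radial limit point lies, for some `c`, in infinitely many shadows `pr_o(B_{γo}(c))`, and these
can be taken with `d(o, γo)` beyond any bound. By the shadow lemma the measures of the far shadows
are dominated by `D` times the terms of the convergent Poincaré series, so the first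
Borel–Cantelli lemma makes the set of such points null. Shadows grow with `c`, so countably many
values of `c` suffice.
-/

open MeasureTheory Filter Set

section

variable {ι α : Type*}

theorem iInter_iUnion_lt_subset_limsup (ρ : ι → ℝ) (S : ι → Set α) (R₀ : ℝ) :
    ⋂ R > (0:ℝ), ⋃ i ∈ {i | R < ρ i}, S i ⊆
      limsup (fun i => {x ∈ S i | R₀ < ρ i}) cofinite := by
  intro x hx
  rw [mem_limsup_iff_frequently_mem, frequently_cofinite_iff_infinite]
  intro hfin
  obtain ⟨M, hM⟩ := (hfin.image ρ).bddAbove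
  set R := max (max M R₀) 0 + 1
  obtain ⟨i, hRi : R < ρ i, hxi⟩ := mem_iUnion₂.1 (mem_iInter₂.1 hx R (by positivity))
  have hR : max M R₀ < R := by linarith [le_max_left (max M R₀) 0]
  have hR₀i : R₀ < ρ i := (le_max_right M R₀).trans_lt (hR.trans hRi)
  have hiM : ρ i ≤ M := hM ⟨i, ⟨hxi, hR₀i⟩, rfl⟩
  linarith [le_max_left M R₀]

variable [MeasurableSpace α] {μ : Measure α}

theorem measure_iInter_iUnion_lt_eq_zero [Countable ι] {ρ : ι → ℝ} {S : ι → Set α} {R₀ : ℝ}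
    {g : ι → ℝ} (hg : Summable g) (hS : ∀ i, R₀ < ρ i → μ (S i) ≤ ENNReal.ofReal (g i)) :
    μ (⋂ R > (0:ℝ), ⋃ i ∈ {i | R < ρ i}, S i) = 0 := by
  refine measure_mono_null (iInter_iUnion_lt_subset_limsup ρ S R₀)
    (measure_limsup_cofinite_eq_zero (ne_top_of_le_ne_top hg.tsum_ofReal_ne_top
      (ENNReal.tsum_le_tsum fun i => ?_)))
  by_cases hi : R₀ < ρ i
  · simpa only [hi, and_true, ofPred_mem_eq] using hS i hi
  · simp only [hi, and_false, ofPred_false, measure_empty, zero_le]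

theorem measure_iUnion_pos_null_of_monotone {A : ℝ → Set α} (hA : Monotone A)
    (h : ∀ c > 0, μ (A c) = 0) : μ (⋃ c > (0:ℝ), A c) = 0 := by
  refine measure_mono_null (iUnion₂_subset fun c _ => ?_)
    (measure_iUnion_null fun n : ℕ => h (n + 1) n.cast_add_one_pos)
  exact (hA ((Nat.le_ceil c).trans (by linarith))).trans
    (subset_iUnion (fun n : ℕ => A (n + 1)) ⌈c⌉₊)

end

theorem radial_limit_null_of_convergent_general {X Bd Γ : Type*} [MetricSpace X] [MeasurableSpace Bd]
    [Group Γ] [Countable Γ] [MulAction Γ X]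
    (δ : ℝ) (o : X)
    (μo : Measure Bd)
    (Sh : Γ → ℝ → Set Bd)
    (hmono : ∀ (γ : Γ) (c c' : ℝ), c ≤ c' → Sh γ c ⊆ Sh γ c')
    (hshadow : ∀ r > (0:ℝ), ∃ c₀ ≥ r, ∀ c ≥ c₀, ∃ D > (1:ℝ), ∀ γ : Γ,
      2 * c < dist o (γ • o) →
        μo (Sh γ c) ≤ ENNReal.ofReal (D * Real.exp (-δ * dist o (γ • o))))
    (hsum : Summable (fun γ : Γ => Real.exp (-δ * dist o (γ • o)))) :
    μo (⋃ c > (0:ℝ), ⋂ R > (0:ℝ), ⋃ γ ∈ {γ : Γ | R < dist o (γ • o)}, Sh γ c) = 0 := by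
  have hA : Monotone fun c => ⋂ R > (0:ℝ), ⋃ γ ∈ {γ : Γ | R < dist o (γ • o)}, Sh γ c :=
    fun c c' h => iInter₂_mono fun _ _ => iUnion₂_mono fun γ _ => hmono γ c c' h
  refine measure_iUnion_pos_null_of_monotone hA fun c hc => ?_
  obtain ⟨c₀, hcc₀, hc₀⟩ := hshadow c hc
  obtain ⟨D, -, hD⟩ := hc₀ c₀ le_rfl
  exact measure_mono_null (hA hcc₀) (measure_iInter_iUnion_lt_eq_zero (hsum.mul_left D) hD)

/-- If the Poincaré series `∑_{γ∈Γ} e^{−δ d(o,γo)}` converges, then the radial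
limit set `L_Γ^rad = ⋃_{c>0} ⋂_{R>0} ⋃_{d(o,γo)>R} pr_o(B_{γo}(c))` has `μ_o`-measure zero.
Here `Sh γ c` denotes the shadow `pr_o(B_{γo}(c))`, which is monotone in `c` and satisfies
the upper bound of the shadow lemma. -/
theorem radial_limit_null_of_convergent {X Bd Γ : Type*} [MetricSpace X] [MeasurableSpace Bd]
    [Group Γ] [Countable Γ] [MulAction Γ X]
    (δ : ℝ) (hδ : 0 < δ) (o : X)
    (μo : Measure Bd)
    (Sh : Γ → ℝ → Set Bd)
    (hmono : ∀ (γ : Γ) (c c' : ℝ), c ≤ c' → Sh γ c ⊆ Sh γ c')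
    (hshadow : ∀ r > (0:ℝ), ∃ c₀ ≥ r, ∀ c ≥ c₀, ∃ D > (1:ℝ), ∀ γ : Γ,
      2 * c < dist o (γ • o) →
        μo (Sh γ c) ≤ ENNReal.ofReal (D * Real.exp (-δ * dist o (γ • o))))
    (hsum : Summable (fun γ : Γ => Real.exp (-δ * dist o (γ • o)))) :
    μo (⋃ c > (0:ℝ), ⋂ R > (0:ℝ), ⋃ γ ∈ {γ : Γ | R < dist o (γ • o)}, Sh γ c) = 0 :=
  radial_limit_null_of_convergent_general δ o μo Sh hmono hshadow hsum
end

section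
/- Generalized shadow lemma (upper bound): for any γ ∈ Γ (with d(o,γo) > 2c), μ_o(O⁺_{c,c}(o,γo)) ≤ e^{4cδ} μ_o(∂X) e^{−δ d(o,γo)}. -/
open Filter Topology MeasureTheory

/-- Generalized shadow lemma (upper bound): for any `γ ∈ Γ` with
`d(o,γo) > 2c`, `μ_o(O⁺_{c,c}(o,γo)) ≤ e^{4cδ} μ_o(∂X) e^{−δ d(o,γo)}`. Here
`O⁺_{c,c}(x,y)` is the large shadow (boundary points `ξ` such that some ray toward `ξ` from a
point of `B_x(c)` meets `B_y(c)`); the hypotheses encode the Busemann limit along rays,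
`Γ`-equivariance, and the conformality upper bound via the Radon–Nikodym derivative. -/
theorem shadow_lemma_upper_bound {X Bd Γ : Type*} [MetricSpace X] [MeasurableSpace Bd]
    [Group Γ] [MulAction Γ X] [MulAction Γ Bd]
    (o : X) (δ c : ℝ) (hδ : 0 < δ) (hc : 0 < c)
    (busem : Bd → X → X → ℝ)
    (ray : X → Bd → ℝ → X)
    (hray0 : ∀ (x : X) (ξ : Bd), ray x ξ 0 = x)
    (hrayisom : ∀ (x : X) (ξ : Bd) (s t : ℝ), 0 ≤ s → 0 ≤ t →
      dist (ray x ξ s) (ray x ξ t) = |s - t|)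
    (hlim : ∀ (ξ : Bd) (x y z : X),
      Tendsto (fun s => dist x (ray z ξ s) - dist y (ray z ξ s)) atTop (𝓝 (busem ξ x y)))
    (hrayequiv : ∀ (γ : Γ) (x : X) (ξ : Bd) (t : ℝ), ray (γ • x) (γ • ξ) t = γ • ray x ξ t)
    (hisom : ∀ (γ : Γ) (x y : X), dist (γ • x) (γ • y) = dist x y)
    (hbequiv : ∀ (γ : Γ) (ξ : Bd) (x y : X), busem (γ • ξ) (γ • x) (γ • y) = busem ξ x y)
    (μ : X → Measure Bd)
    (hequiv : ∀ (γ : Γ) (x : X) (E : Set Bd), μ (γ • x) ((γ • ·) '' E) = μ x E)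
    (hconfUp : ∀ (x : X) (E : Set Bd) (b : ℝ), (∀ η ∈ E, busem η o x ≤ b) →
      μ x E ≤ ENNReal.ofReal (Real.exp (δ * b)) * μ o E) :
    ∀ γ : Γ, 2 * c < dist o (γ • o) →
      μ o {ξ : Bd | ∃ z : X, dist o z < c ∧ ∃ t : ℝ, 0 ≤ t ∧ dist (ray z ξ t) (γ • o) < c} ≤
        ENNReal.ofReal (Real.exp (4 * c * δ) * Real.exp (-δ * dist o (γ • o))) *
          μ o Set.univ := by
  intro γ hγ
  set d := dist o (γ • o) with hd
  set S := {ξ : Bd | ∃ z : X, dist o z < c ∧ ∃ t : ℝ, 0 ≤ t ∧ dist (ray z ξ t) (γ • o) < c}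
    with hS
  have key : ∀ η ∈ (γ⁻¹ • ·) '' S, busem η o (γ⁻¹ • o) ≤ 4 * c - d := by
    rintro η ⟨ξ, hξ, rfl⟩
    have hb : busem (γ⁻¹ • ξ) o (γ⁻¹ • o) = busem ξ (γ • o) o := by
      have := hbequiv γ (γ⁻¹ • ξ) o (γ⁻¹ • o)
      simpa [smul_smul] using this.symm
    simp only []
    rw [hb]
    obtain ⟨z, hz, t, ht, hzt⟩ := hξ
    refine le_of_tendsto (hlim ξ (γ • o) o z) ?_
    filter_upwards [eventually_ge_atTop t] with s hs
    have hs0 : (0:ℝ) ≤ s := ht.trans hs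
    have hts : dist (ray z ξ t) (ray z ξ s) = s - t := by
      rw [hrayisom z ξ t s ht hs0, abs_of_nonpos (by linarith)]; ring
    have hzs : dist z (ray z ξ s) = s := by
      have := hrayisom z ξ 0 s le_rfl hs0
      rw [hray0] at this
      rw [this, abs_of_nonpos (by linarith)]; ring
    have hzt' : dist z (ray z ξ t) = t := by
      have := hrayisom z ξ 0 t le_rfl ht
      rw [hray0] at this
      rw [this, abs_of_nonpos (by linarith)]; ring
    have h3 : d - 2 * c ≤ t := by
      have := dist_triangle4 o z (ray z ξ t) (γ • o)
      rw [hzt'] at this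
      have := dist_comm (ray z ξ t) (γ • o) ▸ hzt
      linarith [dist_triangle4 o z (ray z ξ t) (γ • o),
        (dist_comm (ray z ξ t) (γ • o)) ▸ hzt]
    have h1 : dist (γ • o) (ray z ξ s) ≤ c + (s - t) := by
      calc dist (γ • o) (ray z ξ s)
          ≤ dist (γ • o) (ray z ξ t) + dist (ray z ξ t) (ray z ξ s) := dist_triangle _ _ _
        _ ≤ c + (s - t) := by rw [hts, dist_comm]; linarith
    have h2 : s - c ≤ dist o (ray z ξ s) := by
      have := dist_triangle z o (ray z ξ s)
      rw [dist_comm z o] at this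
      linarith [hzs ▸ this]
    linarith
  have heq : μ (γ⁻¹ • o) ((γ⁻¹ • ·) '' S) = μ o S := hequiv γ⁻¹ o S
  have hmain := hconfUp (γ⁻¹ • o) ((γ⁻¹ • ·) '' S) (4 * c - d) key
  rw [heq] at hmain
  calc μ o S ≤ ENNReal.ofReal (Real.exp (δ * (4 * c - d))) * μ o ((γ⁻¹ • ·) '' S) := hmain
    _ ≤ ENNReal.ofReal (Real.exp (δ * (4 * c - d))) * μ o Set.univ := by
        exact mul_le_mul_right (measure_mono (Set.subset_univ _)) _
    _ = ENNReal.ofReal (Real.exp (4 * c * δ) * Real.exp (-δ * d)) * μ o Set.univ := by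
        rw [← Real.exp_add]
        ring_nf
end
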